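/- The two-node exponentially fitted rule w(F(c) + F(−c)), with w and c satisfying wω cos(ωc) = sin ω and wcω² sin(ωc) = sin ω − ω cos ω, is exact for F(x) = e^{iωx}, F(x) = x e^{iωx}, F(x) = e^{−iωx}, and F(x) = x e^{−iωx}. -/

import Mathlib

/-!
For `k ≠ 0` both integrals have closed forms, `∫₋₁¹ e^{kx} dx = 2 sinh k / k` and
`∫₋₁¹ x e^{kx} dx = 2 (k cosh k - sinh k) / k²`, while the symmetric rule gives
`2 w cosh (kc)` and `2 w c sinh (kc)`. Exactness for `e^{kx}` and `x e^{kx}` thus reduces to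
`w k cosh (kc) = sinh k` and `w c k² sinh (kc) = k cosh k - sinh k`; both are invariant under
`k ↦ -k`, and for `k = iω` they are the two defining equations of `w` and `c`.
-/

open Complex

def IsExactTwoNodeRule (w c : ℝ) (F : ℝ → ℂ) : Prop :=
  ∫ x in (-1 : ℝ)..1, F x = w * F c + w * F (-c)

theorem integral_ofReal_mul_exp_mul {k : ℂ} (hk : k ≠ 0) (a b : ℝ) :
    ∫ x in a..b, (x : ℂ) * exp (k * x) =
      (b / k - 1 / k ^ 2) * exp (k * b) - (a / k - 1 / k ^ 2) * exp (k * a) := by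
  have hderiv (x : ℝ) : HasDerivAt (fun y : ℝ => ((y : ℂ) / k - 1 / k ^ 2) * exp (k * y))
      ((x : ℂ) * exp (k * x)) x := by
    have hexp : HasDerivAt (fun y : ℝ => exp (k * y)) (exp (k * x) * k) x :=
      ((hasDerivAt_id (x : ℂ)).const_mul k).cexp.comp_ofReal.congr_deriv (by simp)
    have hlin : HasDerivAt (fun y : ℝ => (y : ℂ) / k - 1 / k ^ 2) (1 / k) x := by
      simpa [one_div] using
        ((hasDerivAt_id (x : ℂ)).comp_ofReal.div_const k).sub_const (1 / k ^ 2)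
    refine (hlin.mul hexp).congr_deriv ?_
    field_simp
    ring
  exact intervalIntegral.integral_eq_sub_of_hasDerivAt (fun x _ => hderiv x)
    ((continuous_ofReal.mul
      (continuous_exp.comp (continuous_const.mul continuous_ofReal))).intervalIntegrable _ _)

section

variable {w c : ℝ} {k : ℂ}

theorem isExactTwoNodeRule_exp_mul (hk : k ≠ 0)
    (h : w * k * cosh (k * c) = sinh k) :
    IsExactTwoNodeRule w c fun x => exp (k * x) := by
  rw [IsExactTwoNodeRule, integral_exp_mul_complex hk, div_eq_iff hk]
  rw [cosh, sinh] at h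
  push_cast
  rw [mul_neg, mul_neg, mul_one]
  linear_combination (-2) * h

theorem isExactTwoNodeRule_ofReal_mul_exp_mul (hk : k ≠ 0)
    (h : w * c * k ^ 2 * sinh (k * c) = k * cosh k - sinh k) :
    IsExactTwoNodeRule w c fun x => x * exp (k * x) := by
  rw [IsExactTwoNodeRule, integral_ofReal_mul_exp_mul hk]
  rw [cosh, sinh, sinh] at h
  push_cast
  rw [mul_neg, mul_neg, mul_one]
  field_simp
  linear_combination (-2) * h

theorem isExactTwoNodeRule_exp_neg_mul (hk : k ≠ 0) (h : w * k * cosh (k * c) = sinh k) :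
    IsExactTwoNodeRule w c fun x => exp (-k * x) := by
  refine isExactTwoNodeRule_exp_mul (neg_ne_zero.mpr hk) ?_
  rw [neg_mul, cosh_neg, sinh_neg]
  linear_combination -h

theorem isExactTwoNodeRule_ofReal_mul_exp_neg_mul (hk : k ≠ 0)
    (h : w * c * k ^ 2 * sinh (k * c) = k * cosh k - sinh k) :
    IsExactTwoNodeRule w c fun x => x * exp (-k * x) := by
  refine isExactTwoNodeRule_ofReal_mul_exp_mul (neg_ne_zero.mpr hk) ?_
  rw [neg_mul, cosh_neg, sinh_neg, sinh_neg]
  linear_combination -h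

end

section

variable {w c ω : ℝ}

theorem cosh_condition_I_mul (h1 : w * ω * Real.cos (ω * c) = Real.sin ω) :
    w * (I * ω) * cosh (I * ω * c) = sinh (I * ω) := by
  rw [show I * ω * c = (ω * c : ℝ) * I by push_cast; ring, show I * ω = (ω : ℂ) * I by ring,
    cosh_mul_I, sinh_mul_I, ← ofReal_cos, ← ofReal_sin, ← h1]
  push_cast
  ring

theorem sinh_condition_I_mul
    (h2 : w * c * ω ^ 2 * Real.sin (ω * c) = Real.sin ω - ω * Real.cos ω) :
    w * c * (I * ω) ^ 2 * sinh (I * ω * c) = I * ω * cosh (I * ω) - sinh (I * ω) := by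
  rw [show I * ω * c = (ω * c : ℝ) * I by push_cast; ring, show I * ω = (ω : ℂ) * I by ring,
    cosh_mul_I, sinh_mul_I, sinh_mul_I, mul_pow, I_sq]
  have h2c : (w * c * ω ^ 2 * Real.sin (ω * c) : ℂ) = Real.sin ω - ω * Real.cos ω := by
    exact_mod_cast h2
  push_cast at h2c ⊢
  linear_combination (-I) * h2c

end

theorem stmt_12 (w c ω : ℝ) (hω : 0 < ω)
    (h1 : w * ω * Real.cos (ω * c) = Real.sin ω)
    (h2 : w * c * ω ^ 2 * Real.sin (ω * c) = Real.sin ω - ω * Real.cos ω) :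
    ((∫ x in (-1 : ℝ)..1, Complex.exp (Complex.I * ω * x)) =
        w * Complex.exp (Complex.I * ω * c) + w * Complex.exp (Complex.I * ω * (-c))) ∧
    ((∫ x in (-1 : ℝ)..1, (x : ℂ) * Complex.exp (Complex.I * ω * x)) =
        w * ((c : ℂ) * Complex.exp (Complex.I * ω * c)) +
          w * ((-c : ℂ) * Complex.exp (Complex.I * ω * (-c)))) ∧
    ((∫ x in (-1 : ℝ)..1, Complex.exp (-(Complex.I * ω * x))) =
        w * Complex.exp (-(Complex.I * ω * c)) + w * Complex.exp (-(Complex.I * ω * (-c)))) ∧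
    ((∫ x in (-1 : ℝ)..1, (x : ℂ) * Complex.exp (-(Complex.I * ω * x))) =
        w * ((c : ℂ) * Complex.exp (-(Complex.I * ω * c))) +
          w * ((-c : ℂ) * Complex.exp (-(Complex.I * ω * (-c))))) := by
  have hk : I * ω ≠ 0 := mul_ne_zero I_ne_zero (ofReal_ne_zero.mpr hω.ne')
  have exact_exp := isExactTwoNodeRule_exp_mul hk (cosh_condition_I_mul h1)
  have exact_exp_neg := isExactTwoNodeRule_exp_neg_mul hk (cosh_condition_I_mul h1)
  have exact_mul_exp := isExactTwoNodeRule_ofReal_mul_exp_mul hk (sinh_condition_I_mul h2)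
  have exact_mul_exp_neg := isExactTwoNodeRule_ofReal_mul_exp_neg_mul hk (sinh_condition_I_mul h2)
  simp only [IsExactTwoNodeRule, ofReal_neg, neg_mul]
    at exact_exp exact_exp_neg exact_mul_exp exact_mul_exp_neg ⊢
  exact ⟨exact_exp, exact_mul_exp, exact_exp_neg, exact_mul_exp_neg⟩
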